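/- There is a universal constant C > 0 such that: for every k ∈ ℝ with 0 < |k| ≤ 1, every t ≥ 0, and all functions ψ, w : [−1,1] → ℂ with ψ twice continuously differentiable, w continuously differentiable, ψ(±1) = 0, w(±1) = 0, and ψ''(y) − k² ψ(y) = −w(y) on (−1,1), one has ( ‖ψ'‖²_{L²} + ‖ψ‖²_{L²} )^{1/2} ≤ C (1 + |k t|)^{−1} ( ‖(e_{k,t} w)'‖²_{L²} + ‖w‖²_{L²} )^{1/2}, where e_{k,t}(y) = e^{i k y t} and (e_{k,t} w)'(y) = e^{ikyt}( w'(y) + i k t w(y) ). -/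

import Mathlib

open Set

/-- The squared `L²` norm of a function on the interval `(-1, 1)`. -/
noncomputable def L2sq (h : ℝ → ℂ) : ℝ :=
  ∫ y in (-1 : ℝ)..1, ‖h y‖ ^ 2

/-- The function `y ↦ e^{ikyt} w(y)`. -/
noncomputable def ew (k t : ℝ) (w : ℝ → ℂ) : ℝ → ℂ :=
  fun y => Complex.exp (Complex.I * (k : ℂ) * (y : ℂ) * (t : ℂ)) * w y

/-
Pairing the equation with `ψ̄` and integrating by parts gives the energy identity
`∫ w ψ̄ = ‖ψ'‖² + k² ‖ψ‖²`, whence `‖ψ'‖² + k² ‖ψ‖² ≤ ‖w‖ ‖ψ‖` by Cauchy–Schwarz. Multiplying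
the identity by `ikt` and using `ikt w = e^{-ikyt} (e_{k,t} w)' - w'`, a second integration by
parts moves the derivative from `w` onto `ψ̄`, so
`|kt| (‖ψ'‖² + k² ‖ψ‖²) ≤ ‖(e_{k,t} w)'‖ ‖ψ‖ + ‖w‖ ‖ψ'‖`. With the Poincaré inequality
`‖ψ‖² ≤ 4 ‖ψ'‖²` (from `ψ(-1) = 0`) the two bounds give the estimate with `C = 15`.
-/

open MeasureTheory

theorem Continuous.memLp_restrict_Ioc {E : Type*} [NormedAddCommGroup E] {f : ℝ → E}
    (hf : Continuous f) (p : ENNReal) (a b : ℝ) : MemLp f p (volume.restrict (Ioc a b)) := by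
  have : IsFiniteMeasure (volume.restrict (Ioc a b)) := ⟨by simp⟩
  obtain ⟨M, hM⟩ := (isCompact_Icc (a := a) (b := b)).exists_bound_of_continuousOn hf.continuousOn
  refine MemLp.of_bound hf.aestronglyMeasurable M ?_
  filter_upwards [ae_restrict_mem measurableSet_Ioc] with x hx
  exact hM x (Ioc_subset_Icc_self hx)

theorem intervalIntegral.integral_norm_mul_norm_le {E : Type*} [NormedAddCommGroup E]
    {a b : ℝ} (hab : a ≤ b) {f g : ℝ → E} (hf : Continuous f) (hg : Continuous g) :
    ∫ x in a..b, ‖f x‖ * ‖g x‖ ≤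
      √(∫ x in a..b, ‖f x‖ ^ 2) * √(∫ x in a..b, ‖g x‖ ^ 2) := by
  simp only [intervalIntegral.integral_of_le hab, Real.sqrt_eq_rpow, ← Real.rpow_natCast]
  simpa using integral_mul_norm_le_Lp_mul_Lq Real.HolderConjugate.two_two
    (by simpa using hf.memLp_restrict_Ioc 2 a b) (by simpa using hg.memLp_restrict_Ioc 2 a b)

theorem L2sq_nonneg (h : ℝ → ℂ) : 0 ≤ L2sq h :=
  intervalIntegral.integral_nonneg (by norm_num) fun _ _ => by positivity

theorem L2sq_comp_star (h : ℝ → ℂ) : L2sq (fun y => star (h y)) = L2sq h := by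
  simp only [L2sq, norm_star]

theorem integral_mul_star_self (f : ℝ → ℂ) :
    ∫ y in (-1 : ℝ)..1, f y * star (f y) = (L2sq f : ℂ) := by
  simp_rw [Complex.star_def, Complex.mul_conj', ← Complex.ofReal_pow]
  exact intervalIntegral.integral_ofReal

theorem norm_integral_mul_star_le {f g : ℝ → ℂ} (hf : Continuous f) (hg : Continuous g) :
    ‖∫ y in (-1 : ℝ)..1, f y * star (g y)‖ ≤ √(L2sq f) * √(L2sq g) := by
  calc ‖∫ y in (-1 : ℝ)..1, f y * star (g y)‖
      ≤ ∫ y in (-1 : ℝ)..1, ‖f y‖ * ‖star (g y)‖ := by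
        simpa only [norm_mul] using
          intervalIntegral.norm_integral_le_integral_norm (f := fun y => f y * star (g y))
            (by norm_num : (-1 : ℝ) ≤ 1)
    _ ≤ √(L2sq f) * √(L2sq fun y => star (g y)) :=
        intervalIntegral.integral_norm_mul_norm_le (by norm_num) hf hg.star
    _ = √(L2sq f) * √(L2sq g) := by rw [L2sq_comp_star]

theorem norm_sq_le_two_mul_L2sq_deriv {ψ : ℝ → ℂ} (hψ : ContDiff ℝ 1 ψ) (hψl : ψ (-1) = 0)
    {y : ℝ} (hy : y ∈ Icc (-1 : ℝ) 1) : ‖ψ y‖ ^ 2 ≤ 2 * L2sq (deriv ψ) := by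
  have hψ' : Continuous (deriv ψ) := hψ.continuous_deriv le_rfl
  have hftc : ∫ s in (-1 : ℝ)..y, deriv ψ s = ψ y := by
    rw [intervalIntegral.integral_deriv_eq_sub (fun x _ => hψ.differentiable one_ne_zero x)
      (hψ'.intervalIntegrable _ _), hψl, sub_zero]
  have hbound : ‖ψ y‖ ≤ √(L2sq (deriv ψ)) * √2 :=
    calc ‖ψ y‖ ≤ ∫ s in (-1 : ℝ)..y, ‖deriv ψ s‖ :=
          hftc ▸ intervalIntegral.norm_integral_le_integral_norm hy.1
      _ ≤ ∫ s in (-1 : ℝ)..1, ‖deriv ψ s‖ * ‖(1 : ℂ)‖ := by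
          simpa using intervalIntegral.integral_mono_interval le_rfl hy.1 hy.2
            (Filter.Eventually.of_forall fun _ => norm_nonneg _)
            (hψ'.norm.intervalIntegrable _ _)
      _ ≤ √(L2sq (deriv ψ)) * √(∫ _ in (-1 : ℝ)..1, ‖(1 : ℂ)‖ ^ 2) :=
          intervalIntegral.integral_norm_mul_norm_le (by norm_num) hψ' continuous_const
      _ = √(L2sq (deriv ψ)) * √2 := by norm_num
  calc ‖ψ y‖ ^ 2 ≤ (√(L2sq (deriv ψ)) * √2) ^ 2 := by gcongr
    _ = 2 * L2sq (deriv ψ) := by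
        rw [mul_pow, Real.sq_sqrt (L2sq_nonneg _), Real.sq_sqrt zero_le_two, mul_comm]

theorem L2sq_le_four_mul_L2sq_deriv {ψ : ℝ → ℂ} (hψ : ContDiff ℝ 1 ψ) (hψl : ψ (-1) = 0) :
    L2sq ψ ≤ 4 * L2sq (deriv ψ) := by
  calc L2sq ψ ≤ ∫ _ in (-1 : ℝ)..1, 2 * L2sq (deriv ψ) :=
        intervalIntegral.integral_mono_on (by norm_num : (-1 : ℝ) ≤ 1)
          ((hψ.continuous.norm.pow 2).intervalIntegrable _ _) intervalIntegrable_const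
          fun _ hy => norm_sq_le_two_mul_L2sq_deriv hψ hψl hy
    _ = 4 * L2sq (deriv ψ) := by norm_num; ring

theorem intervalIntegral.integral_deriv_mul_star_eq_neg {a b : ℝ} {f g : ℝ → ℂ}
    (hf : ContDiff ℝ 1 f) (hg : ContDiff ℝ 1 g) (hga : g a = 0) (hgb : g b = 0) :
    ∫ y in a..b, deriv f y * star (g y) = -∫ y in a..b, f y * star (deriv g y) := by
  have hibp := intervalIntegral.integral_mul_deriv_eq_deriv_mul (a := a) (b := b) (u := f)
    (v := fun y => star (g y))
    (fun x _ => (hf.differentiable one_ne_zero x).hasDerivAt)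
    (fun x _ => (hg.differentiable one_ne_zero x).hasDerivAt.star)
    ((hf.continuous_deriv le_rfl).intervalIntegrable _ _)
    ((hg.continuous_deriv le_rfl).star.intervalIntegrable _ _)
  rw [hibp, hga, hgb]
  simp

theorem integral_mul_star_eq_L2sq_deriv_add_of_ode {k : ℝ} {ψ w : ℝ → ℂ} (hψ : ContDiff ℝ 2 ψ)
    (hψl : ψ (-1) = 0) (hψr : ψ 1 = 0)
    (heq : ∀ y ∈ Ioo (-1 : ℝ) 1, deriv (deriv ψ) y - (k : ℂ) ^ 2 * ψ y = -w y) :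
    ∫ y in (-1 : ℝ)..1, w y * star (ψ y) = ((L2sq (deriv ψ) + k ^ 2 * L2sq ψ : ℝ) : ℂ) := by
  have hψ₁ : ContDiff ℝ 1 ψ := hψ.of_le one_le_two
  have hψ' : ContDiff ℝ 1 (deriv ψ) := hψ.deriv'
  have hψ'' : Continuous (deriv (deriv ψ)) := hψ'.continuous_deriv le_rfl
  have hcψ : Continuous ψ := hψ₁.continuous
  have hcont₁ : Continuous fun y => (k : ℂ) ^ 2 * (ψ y * star (ψ y)) := by fun_prop
  have hcont₂ : Continuous fun y => deriv (deriv ψ) y * star (ψ y) := by fun_prop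
  calc ∫ y in (-1 : ℝ)..1, w y * star (ψ y)
      = ∫ y in (-1 : ℝ)..1, (k : ℂ) ^ 2 * (ψ y * star (ψ y)) - deriv (deriv ψ) y * star (ψ y) :=
        intervalIntegral.integral_congr_Ioo_of_le (by norm_num) fun y hy => by
          linear_combination (star (ψ y)) * heq y hy
    _ = (k : ℂ) ^ 2 * L2sq ψ + ∫ y in (-1 : ℝ)..1, deriv ψ y * star (deriv ψ y) := by
        rw [intervalIntegral.integral_sub (hcont₁.intervalIntegrable _ _)
          (hcont₂.intervalIntegrable _ _), intervalIntegral.integral_const_mul,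
          integral_mul_star_self, intervalIntegral.integral_deriv_mul_star_eq_neg hψ' hψ₁ hψl hψr,
          sub_neg_eq_add]
    _ = _ := by rw [integral_mul_star_self]; push_cast; ring

theorem integral_deriv_add_mul_mul_star {ψ w : ℝ → ℂ} (hψ : ContDiff ℝ 1 ψ) (hw : ContDiff ℝ 1 w)
    (hψl : ψ (-1) = 0) (hψr : ψ 1 = 0) (c : ℂ) :
    ∫ y in (-1 : ℝ)..1, (deriv w y + c * w y) * star (ψ y) =
      c * (∫ y in (-1 : ℝ)..1, w y * star (ψ y)) - ∫ y in (-1 : ℝ)..1, w y * star (deriv ψ y) := by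
  have hcψ := hψ.continuous
  have hcw' := hw.continuous_deriv le_rfl
  have hcont₁ : Continuous fun y => deriv w y * star (ψ y) := by fun_prop
  have hcont₂ : Continuous fun y => c * (w y * star (ψ y)) := by fun_prop
  simp_rw [add_mul, mul_assoc]
  rw [intervalIntegral.integral_add (hcont₁.intervalIntegrable _ _) (hcont₂.intervalIntegrable _ _),
    intervalIntegral.integral_const_mul,
    intervalIntegral.integral_deriv_mul_star_eq_neg hw hψ hψl hψr]
  ring

theorem hasDerivAt_ew {k t : ℝ} {w : ℝ → ℂ} {w' : ℂ} {y : ℝ} (hw : HasDerivAt w w' y) :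
    HasDerivAt (ew k t w)
      (Complex.exp (Complex.I * k * y * t) * (w' + Complex.I * k * t * w y)) y := by
  have hphase : HasDerivAt (fun y : ℝ => Complex.I * k * y * t) (Complex.I * k * t) y := by
    simpa using (((hasDerivAt_id y).ofReal_comp).const_mul (Complex.I * k)).mul_const (t : ℂ)
  exact (hphase.cexp.mul hw).congr_deriv (by ring)

theorem L2sq_deriv_ew {k t : ℝ} {w : ℝ → ℂ} (hw : Differentiable ℝ w) :
    L2sq (deriv (ew k t w)) = L2sq fun y => deriv w y + Complex.I * k * t * w y := by
  have hphase : ∀ y : ℝ, ‖Complex.exp (Complex.I * k * y * t)‖ = 1 := fun y => by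
    rw [Complex.norm_exp]; simp
  simp only [L2sq, (hasDerivAt_ew (hw _).hasDerivAt).deriv, norm_mul, hphase, one_mul]

-- In the application `e = ‖∫ w ψ̄‖ = ‖ψ'‖² + k² ‖ψ‖²` and `s = |kt|`.
theorem sqrt_add_le_of_energy_bounds {a b p q e s : ℝ} (ha : 0 ≤ a) (hp : 0 ≤ p) (hq : 0 ≤ q)
    (hs : 0 ≤ s) (hae : a ≤ e) (hba : b ≤ 4 * a) (he : e ≤ √q * √b)
    (hse : s * e ≤ √p * √b + √q * √a) :
    √(a + b) ≤ 15 * (1 + s)⁻¹ * √(p + q) := by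
  set A := √(p + q)
  set ε := √e
  have hA : 0 ≤ A := Real.sqrt_nonneg _
  have hε : 0 ≤ ε := Real.sqrt_nonneg _
  have hεsq : ε ^ 2 = e := Real.sq_sqrt (ha.trans hae)
  have hpA : √p ≤ A := Real.sqrt_le_sqrt (by linarith)
  have hqA : √q ≤ A := Real.sqrt_le_sqrt (by linarith)
  have hαε : √a ≤ ε := Real.sqrt_le_sqrt hae
  have hβε : √b ≤ 2 * ε := Real.sqrt_le_iff.mpr ⟨by positivity, by rw [mul_pow, hεsq]; linarith⟩
  have hsum : √(a + b) ≤ 3 * ε :=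
    Real.sqrt_le_iff.mpr ⟨by positivity, by rw [mul_pow, hεsq]; linarith⟩
  have hεA : ε ≤ 2 * A := by
    have : ε ^ 2 ≤ 2 * A * ε := by
      rw [hεsq]; nlinarith [Real.sqrt_nonneg q, Real.sqrt_nonneg b]
    nlinarith
  have hsεA : s * ε ≤ 3 * A := by
    have : s * ε ^ 2 ≤ 3 * A * ε := by
      rw [hεsq]; nlinarith [Real.sqrt_nonneg p, Real.sqrt_nonneg q, Real.sqrt_nonneg a,
        Real.sqrt_nonneg b]
    nlinarith
  rw [mul_right_comm, ← div_eq_mul_inv, le_div_iff₀ (by positivity)]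
  nlinarith

/-- Low-frequency stream function estimate:
`‖(∂_y,1)ψ‖ ≤ C (1+|kt|)^{-1} ‖(∂_y,1)(e^{ikyt}w)‖` for `0 < |k| ≤ 1`. -/
theorem psi_lowfreq_first :
    ∃ C > (0 : ℝ), ∀ (k t : ℝ) (ψ w : ℝ → ℂ),
      k ≠ 0 → |k| ≤ 1 → 0 ≤ t →
      ContDiff ℝ 2 ψ → ContDiff ℝ 1 w →
      ψ (-1) = 0 → ψ 1 = 0 → w (-1) = 0 → w 1 = 0 →
      (∀ y ∈ Ioo (-1 : ℝ) 1, deriv (deriv ψ) y - (k : ℂ) ^ 2 * ψ y = -w y) →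
      Real.sqrt (L2sq (deriv ψ) + L2sq ψ)
        ≤ C * (1 + |k * t|)⁻¹ * Real.sqrt (L2sq (deriv (ew k t w)) + L2sq w) := by
  refine ⟨15, by norm_num, fun k t ψ w _ _ _ hψ hw hψl hψr _ _ heq => ?_⟩
  have hψ₁ : ContDiff ℝ 1 ψ := hψ.of_le one_le_two
  have hcw' : Continuous fun y => deriv w y + Complex.I * k * t * w y :=
    (hw.continuous_deriv le_rfl).add (continuous_const.mul hw.continuous)
  have henergy := integral_mul_star_eq_L2sq_deriv_add_of_ode hψ hψl hψr heq
  have hosc := integral_deriv_add_mul_mul_star hψ₁ hw hψl hψr (Complex.I * k * t)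
  set I := ∫ y in (-1 : ℝ)..1, w y * star (ψ y)
  have hI : ‖I‖ = L2sq (deriv ψ) + k ^ 2 * L2sq ψ := by
    rw [henergy, Complex.norm_real,
      Real.norm_of_nonneg (by positivity [L2sq_nonneg ψ, L2sq_nonneg (deriv ψ)])]
  refine sqrt_add_le_of_energy_bounds (e := ‖I‖) (L2sq_nonneg _) (L2sq_nonneg _) (L2sq_nonneg _)
    (abs_nonneg _) (hI ▸ le_add_of_nonneg_right (by positivity [L2sq_nonneg ψ]))
    (L2sq_le_four_mul_L2sq_deriv hψ₁ hψl)
    (norm_integral_mul_star_le hw.continuous hψ₁.continuous) ?_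
  rw [L2sq_deriv_ew (hw.differentiable one_ne_zero)]
  calc |k * t| * ‖I‖
      = ‖(∫ y in (-1 : ℝ)..1, (deriv w y + Complex.I * k * t * w y) * star (ψ y))
          + ∫ y in (-1 : ℝ)..1, w y * star (deriv ψ y)‖ := by
        rw [hosc, sub_add_cancel, norm_mul]; simp
    _ ≤ _ := (norm_add_le _ _).trans (add_le_add (norm_integral_mul_star_le hcw' hψ₁.continuous)
        (norm_integral_mul_star_le hw.continuous (hψ₁.continuous_deriv le_rfl)))
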